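/- arXiv:2509.00871 — 2 statements merged into one kernel-verified Lean document; each statement's English description precedes it below -/
import Mathlib

section
/- For any two distinct positive roots α, β ∈ Φ⁺, there exists a nonzero vector v in the linear span of {α, β} with Q(v) ≤ 0. -/
/-!
Every root has `Q = 1` and integer coordinates with odd sum, because the simple roots do and
each simple reflection is a `B`-isometry changing a vector by an even multiple of a simple root.
Hence `c = ⟨a, b⟩` is an odd integer, so `c² ≥ 1` and `Q (c • a - b) = 1 - c² ≤ 0`.
The vector `c • a - b` is nonzero: otherwise `b = ± a`, and two distinct positive roots
are neither equal nor opposite.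
-/

open scoped NNReal

noncomputable section

/-- The ambient vector space `V = ℝ³`. -/
abbrev V : Type := Fin 3 → ℝ

/-- The symmetric bilinear form with `⟨αᵢ,αⱼ⟩ = 1` if `i = j` and `-1` otherwise. -/
def B (x y : V) : ℝ := 2 * (∑ i, x i * y i) - (∑ i, x i) * (∑ i, y i)

/-- The associated quadratic form. -/
def Q (x : V) : ℝ := B x x

/-- The simple roots `α₁, α₂, α₃` (the standard basis vectors). -/
def α (i : Fin 3) : V := Pi.single i 1

/-- The set of simple roots. -/
def Δ : Set V := Set.range α

/-- `f` is the reflection `r_{αᵢ} : x ↦ x - 2⟨αᵢ,x⟩αᵢ` for some `i` (note `⟨αᵢ,αᵢ⟩ = 1`). -/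
def IsSimpleReflection (f : V ≃ₗ[ℝ] V) : Prop :=
  ∃ i : Fin 3, ∀ x : V, f x = x - (2 * B (α i) x) • α i

/-- The group `W ≤ GL(V)` generated by the three simple reflections:
the standard reflection representation of `U₃`. -/
def W : Subgroup (V ≃ₗ[ℝ] V) := Subgroup.closure {f | IsSimpleReflection f}

/-- The root system `Φ = {w·αᵢ : w ∈ W, i ∈ {1,2,3}}`. -/
def Φ : Set V := {x | ∃ w ∈ W, ∃ i : Fin 3, x = w (α i)}

/-- `Span_{≥0}(X)`: the set of nonnegative linear combinations of elements of `X`. -/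
def nnspan (X : Set V) : Set V := (Submodule.span ℝ≥0 X : Set V)

/-- The positive roots `Φ⁺ = Φ ∩ Span_{≥0}(Δ)`. -/
def Φpos : Set V := Φ ∩ nnspan Δ

/-- `R ⊆ Φ⁺` is closed if for all `a, b ∈ R`, `Span_{≥0}{a,b} ∩ Φ⁺ ⊆ R`. -/
def IsClosedSet (R : Set V) : Prop := ∀ a ∈ R, ∀ b ∈ R, nnspan {a, b} ∩ Φpos ⊆ R

/-- `R` is a biclosed subset of `Φ⁺`. -/
def IsBiclosed (R : Set V) : Prop := R ⊆ Φpos ∧ IsClosedSet R ∧ IsClosedSet (Φpos \ R)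

open scoped Pointwise

lemma B_comm (x y : V) : B x y = B y x := by
  simp only [B, Fin.sum_univ_three]; ring

lemma B_sub_smul_left (x y u : V) (s : ℝ) : B (x - s • u) y = B x y - s * B u y := by
  simp only [B, Fin.sum_univ_three, Pi.sub_apply, Pi.smul_apply, smul_eq_mul]; ring

lemma B_sub_smul_right (x y u : V) (s : ℝ) : B x (y - s • u) = B x y - s * B x u := by
  rw [B_comm, B_sub_smul_left, B_comm x, B_comm x]

lemma Q_smul_sub (t : ℝ) (x y : V) : Q (t • x - y) = t ^ 2 * Q x - 2 * t * B x y + Q y := by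
  simp only [Q, B, Fin.sum_univ_three, Pi.sub_apply, Pi.smul_apply, smul_eq_mul]; ring

lemma Q_smul (t : ℝ) (x : V) : Q (t • x) = t ^ 2 * Q x := by
  simp only [Q, B, Fin.sum_univ_three, Pi.smul_apply, smul_eq_mul]; ring

lemma Q_α (i : Fin 3) : Q (α i) = 1 := by
  simp only [Q, B, α, Pi.single_apply]
  norm_num

/-- The reflection `r_u`, in the form valid when `Q u = 1`. -/
def reflect (u x : V) : V := x - (2 * B u x) • u

lemma B_reflect_reflect {u : V} (hu : Q u = 1) (x y : V) :
    B (reflect u x) (reflect u y) = B x y := by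
  simp only [reflect, B_sub_smul_left, B_sub_smul_right, B_comm x u]
  rw [show B u u = 1 from hu]
  ring

lemma reflect_reflect {u : V} (hu : Q u = 1) (x : V) : reflect u (reflect u x) = x := by
  have h : B u (reflect u x) = -B u x := by
    rw [reflect, B_sub_smul_right, show B u u = 1 from hu]; ring
  rw [reflect, h, reflect]
  module

def oddSumIntVectors : Set V := {x | ∃ z : Fin 3 → ℤ, Odd (∑ i, z i) ∧ x = Int.cast ∘ z}

lemma B_odd_of_mem_oddSumIntVectors {x y : V} (hx : x ∈ oddSumIntVectors)
    (hy : y ∈ oddSumIntVectors) : ∃ k : ℤ, Odd k ∧ B x y = k := by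
  obtain ⟨z, hz, rfl⟩ := hx
  obtain ⟨w, hw, rfl⟩ := hy
  refine ⟨2 * ∑ i, z i * w i - (∑ i, z i) * ∑ i, w i,
    (even_two_mul _).sub_odd (hz.mul hw), ?_⟩
  simp only [B, Function.comp_apply]
  push_cast
  rfl

lemma α_mem_oddSumIntVectors (i : Fin 3) : α i ∈ oddSumIntVectors :=
  ⟨Pi.single i 1, by simp, by ext j; simp [α, Pi.single_apply]⟩

lemma reflect_mem_oddSumIntVectors {u x : V} (hu : u ∈ oddSumIntVectors)
    (hx : x ∈ oddSumIntVectors) : reflect u x ∈ oddSumIntVectors := by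
  obtain ⟨k, -, hk⟩ := B_odd_of_mem_oddSumIntVectors hu hx
  obtain ⟨z, hz, rfl⟩ := hx
  obtain ⟨v, -, rfl⟩ := hu
  refine ⟨z - (2 * k) • v, ?_, ?_⟩
  · simp only [Pi.sub_apply, Pi.smul_apply, smul_eq_mul, Finset.sum_sub_distrib,
      ← Finset.mul_sum]
    exact hz.sub_even (by rw [mul_assoc]; exact even_two_mul _)
  · ext j
    simp [reflect, hk]

def isometryGroup : Subgroup (V ≃ₗ[ℝ] V) where
  carrier := {f | ∀ x y, B (f x) (f y) = B x y}
  one_mem' _ _ := rfl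
  mul_mem' hf hg x y := (hf _ _).trans (hg x y)
  inv_mem' {f} hf x y := by
    rw [← hf, show f (f⁻¹ x) = x from f.apply_symm_apply x,
      show f (f⁻¹ y) = y from f.apply_symm_apply y]

lemma IsSimpleReflection.exists_eq_reflect {f : V ≃ₗ[ℝ] V} (hf : IsSimpleReflection f) :
    ∃ i, ⇑f = reflect (α i) :=
  let ⟨i, hi⟩ := hf
  ⟨i, funext hi⟩

lemma W_le_isometryGroup : W ≤ isometryGroup := by
  refine (Subgroup.closure_le _).mpr fun f hf => ?_
  obtain ⟨i, hi⟩ := hf.exists_eq_reflect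
  intro x y
  rw [hi]
  exact B_reflect_reflect (Q_α i) x y

lemma W_le_stabilizer_oddSumIntVectors :
    W ≤ MulAction.stabilizer (V ≃ₗ[ℝ] V) oddSumIntVectors := by
  refine (Subgroup.closure_le _).mpr fun f hf => ?_
  obtain ⟨i, hi⟩ := hf.exists_eq_reflect
  have maps_to : ∀ x ∈ oddSumIntVectors, f • x ∈ oddSumIntVectors := fun x hx => by
    rw [LinearEquiv.smul_def, hi]
    exact reflect_mem_oddSumIntVectors (α_mem_oddSumIntVectors i) hx
  refine Set.Subset.antisymm (Set.smul_set_subset_iff.mpr maps_to) fun x hx => ?_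
  have hfx : f • f • x = x := by
    simp only [LinearEquiv.smul_def, hi]
    exact reflect_reflect (Q_α i) x
  rw [← hfx]
  exact Set.smul_mem_smul_set (maps_to x hx)

lemma Q_eq_one_of_mem_Φ {x : V} (hx : x ∈ Φ) : Q x = 1 := by
  obtain ⟨w, hw, i, rfl⟩ := hx
  exact (W_le_isometryGroup hw _ _).trans (Q_α i)

lemma mem_oddSumIntVectors_of_mem_Φ {x : V} (hx : x ∈ Φ) : x ∈ oddSumIntVectors := by
  obtain ⟨w, hw, i, rfl⟩ := hx
  rw [← MulAction.mem_stabilizer_iff.mp (W_le_stabilizer_oddSumIntVectors hw)]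
  exact Set.smul_mem_smul_set (α_mem_oddSumIntVectors i)

lemma one_le_B_sq_of_mem_Φ {a b : V} (ha : a ∈ Φ) (hb : b ∈ Φ) : 1 ≤ B a b ^ 2 := by
  obtain ⟨k, hk, hB⟩ := B_odd_of_mem_oddSumIntVectors
    (mem_oddSumIntVectors_of_mem_Φ ha) (mem_oddSumIntVectors_of_mem_Φ hb)
  rw [hB, one_le_sq_iff_one_le_abs, ← Int.cast_abs]
  exact_mod_cast Int.one_le_abs fun hk0 => Int.not_odd_zero (hk0 ▸ hk)

lemma nonneg_of_mem_nnspan_Δ {x : V} (hx : x ∈ nnspan Δ) (i : Fin 3) : 0 ≤ x i := by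
  induction hx using Submodule.span_induction with
  | mem _ hy =>
    obtain ⟨j, rfl⟩ := hy
    by_cases h : i = j <;> simp [α, h]
  | zero => rfl
  | add _ _ _ _ hy hz => exact add_nonneg hy hz
  | smul c _ _ hy => exact mul_nonneg c.2 hy

lemma eq_of_mem_Φpos_of_eq_smul {a b : V} {t : ℝ} (ha : a ∈ Φpos) (hb : b ∈ Φpos)
    (hba : b = t • a) : b = a := by
  have ht : t ^ 2 = 1 := by
    have h := Q_smul t a
    rw [← hba, Q_eq_one_of_mem_Φ ha.1, Q_eq_one_of_mem_Φ hb.1] at h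
    linarith
  rcases sq_eq_one_iff.mp ht with rfl | rfl
  · rw [hba, one_smul]
  · have a_eq_zero : a = 0 := funext fun i => le_antisymm
      (by simpa [hba] using nonneg_of_mem_nnspan_Δ hb.2 i) (nonneg_of_mem_nnspan_Δ ha.2 i)
    have := Q_eq_one_of_mem_Φ ha.1
    simp [a_eq_zero, Q, B] at this

/-- For any two distinct positive roots `a, b`, there is a nonzero vector in their
linear span with nonpositive norm. -/
theorem span_of_two_roots_meets_cone (a b : V) (ha : a ∈ Φpos) (hb : b ∈ Φpos)
    (hab : a ≠ b) :
    ∃ v ∈ Submodule.span ℝ ({a, b} : Set V), v ≠ 0 ∧ Q v ≤ 0 := by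
  refine ⟨B a b • a - b, ?_, ?_, ?_⟩
  · exact Submodule.sub_mem _ (Submodule.smul_mem _ _ (Submodule.subset_span (by simp)))
      (Submodule.subset_span (by simp))
  · exact fun h => hab (eq_of_mem_Φpos_of_eq_smul ha hb (sub_eq_zero.mp h).symm).symm
  · rw [Q_smul_sub, Q_eq_one_of_mem_Φ ha.1, Q_eq_one_of_mem_Φ hb.1]
    nlinarith [one_le_B_sq_of_mem_Φ ha.1 hb.1]
end
end

section
/- Let R ⊆ Φ⁺ be a parabolic biclosed set. Then R is finite and nonempty if and only if R = Inv(w) for some w ∈ W with w ≠ id. -/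
open scoped NNReal

noncomputable section

/-- A rank-2 parabolic subsystem `w·(Span{αᵢ,αⱼ} ∩ Φ)`. -/
def IsRank2Parabolic (P : Set V) : Prop :=
  ∃ w ∈ W, ∃ i j : Fin 3, i ≠ j ∧
    P = (fun x => w x) '' ((Submodule.span ℝ {α i, α j} : Set V) ∩ Φ)

/-- `R'` is closed in the set of positive roots `Φ'pos` of a subsystem. -/
def IsClosedIn (Φ'pos R' : Set V) : Prop := ∀ a ∈ R', ∀ b ∈ R', nnspan {a, b} ∩ Φ'pos ⊆ R'

/-- `R'` is biclosed in the set of positive roots `Φ'pos` of a subsystem. -/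
def IsBiclosedIn (Φ'pos R' : Set V) : Prop :=
  R' ⊆ Φ'pos ∧ IsClosedIn Φ'pos R' ∧ IsClosedIn Φ'pos (Φ'pos \ R')

/-- `R ⊆ Φ⁺` is parabolic biclosed if its intersection with every rank-2 parabolic
subsystem `Φ'` is biclosed in `Φ'⁺`. -/
def IsParabolicBiclosed (R : Set V) : Prop :=
  R ⊆ Φpos ∧ ∀ P, IsRank2Parabolic P → IsBiclosedIn (P ∩ Φpos) (R ∩ P)

/-- The inversion set `Inv(w) = Φ⁺ ∩ w·Φ⁻`, where `Φ⁻ = -Φ⁺`. -/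
def Inversions (w : V ≃ₗ[ℝ] V) : Set V := Φpos ∩ (fun y => w y) '' (-Φpos)

/-!
The positive roots are exactly the vectors `s_{i₁} ⋯ s_{iₖ₋₁} α_{iₖ}` for words without two equal
adjacent letters: along such a word all coordinates stay nonnegative and the largest one sits at
the first letter. Inversion sets are finite since `Inv(sᵢ u) ⊆ {αᵢ} ∪ sᵢ Inv(u)`, and if
`w = s_{i₁} ⋯ s_{iₖ}` with no equal adjacent letters then `s_{i₁} ⋯ s_{iₖ₋₁} α_{iₖ} ∈ Inv(w)`.

Conversely, the word of a non-simple positive root ends in a maximal alternating block in two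
letters `p, q`; shortening that block, or replacing it by `q`, gives two shorter roots of the same
rank-2 parabolic subsystem having the root in their nonnegative span. Coclosedness therefore puts
one of them in `R`, so a nonempty parabolic biclosed `R` contains a simple root `αᵢ`. Then
`sᵢ (R \ {αᵢ})` is again parabolic biclosed, equal to `Inv(u)` by induction on `|R|`, and
`R = Inv(sᵢ u)` because `Inv(sᵢ u) = {αᵢ} ∪ sᵢ Inv(u)` when `αᵢ ∉ Inv(u)`.
-/

lemma B_add_right (z x y : V) : B z (x + y) = B z x + B z y := by
  simp only [B, Pi.add_apply, Fin.sum_univ_three]; ring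

lemma B_smul_right (z : V) (c : ℝ) (x : V) : B z (c • x) = c * B z x := by
  simp only [B, Pi.smul_apply, smul_eq_mul, Fin.sum_univ_three]; ring

lemma α_apply (i c : Fin 3) : α i c = if c = i then 1 else 0 := by
  simp [α, Pi.single_apply]

lemma B_α_left (i : Fin 3) (x : V) : B (α i) x = 2 * x i - ∑ c, x c := by
  fin_cases i <;> simp [B, Fin.sum_univ_three, α_apply]

lemma B_α_self (i : Fin 3) : B (α i) (α i) = 1 := by
  fin_cases i <;> norm_num [B_α_left, Fin.sum_univ_three, α_apply]

lemma B_α_of_ne {i j : Fin 3} (h : i ≠ j) : B (α i) (α j) = -1 := by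
  fin_cases i <;> fin_cases j <;>
    first | exact absurd rfl h | norm_num [B_α_left, Fin.sum_univ_three, α_apply]

def simpleReflLin (i : Fin 3) : V →ₗ[ℝ] V where
  toFun x := x - (2 * B (α i) x) • α i
  map_add' x y := by simp only [B_add_right, mul_add, add_smul]; abel
  map_smul' c x := by simp only [B_smul_right, RingHom.id_apply, smul_sub, smul_smul]; ring_nf

lemma simpleReflLin_involutive (i : Fin 3) : Function.Involutive (simpleReflLin i) := by
  intro x
  simp only [simpleReflLin, LinearMap.coe_mk, AddHom.coe_mk, B_add_right, B_smul_right,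
    sub_eq_add_neg, ← neg_smul, B_α_self]
  module

def simpleRefl (i : Fin 3) : V ≃ₗ[ℝ] V :=
  LinearEquiv.ofInvolutive (simpleReflLin i) (simpleReflLin_involutive i)

lemma simpleRefl_apply (i : Fin 3) (x : V) :
    simpleRefl i x = x - (2 * B (α i) x) • α i := rfl

@[simp]
lemma simpleRefl_apply_apply (i : Fin 3) (x : V) : simpleRefl i (simpleRefl i x) = x :=
  simpleReflLin_involutive i x

lemma simpleRefl_symm (i : Fin 3) : (simpleRefl i).symm = simpleRefl i :=
  LinearEquiv.ext fun x => by rw [LinearEquiv.symm_apply_eq, simpleRefl_apply_apply]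

lemma simpleRefl_mul_self (i : Fin 3) : simpleRefl i * simpleRefl i = 1 :=
  LinearEquiv.ext (simpleRefl_apply_apply i)

lemma simpleRefl_inv (i : Fin 3) : (simpleRefl i)⁻¹ = simpleRefl i :=
  inv_eq_of_mul_eq_one_right (simpleRefl_mul_self i)

lemma simpleRefl_α_self (i : Fin 3) : simpleRefl i (α i) = -α i := by
  rw [simpleRefl_apply, B_α_self]
  module

lemma simpleRefl_apply_coord (i : Fin 3) (x : V) (c : Fin 3) :
    simpleRefl i x c = if c = i then 2 * ∑ d, x d - 3 * x i else x c := by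
  simp only [simpleRefl_apply, Pi.sub_apply, Pi.smul_apply, smul_eq_mul, α_apply, B_α_left]
  split_ifs with h
  · subst h; ring
  · ring

lemma simpleRefl_mem_W (i : Fin 3) : simpleRefl i ∈ W :=
  Subgroup.subset_closure ⟨i, fun _ => rfl⟩

lemma eq_simpleRefl_of_isSimpleReflection {f : V ≃ₗ[ℝ] V} (hf : IsSimpleReflection f) :
    ∃ i, f = simpleRefl i := by
  obtain ⟨i, hi⟩ := hf
  exact ⟨i, LinearEquiv.ext hi⟩

def wordProd (l : List (Fin 3)) : V ≃ₗ[ℝ] V := (l.map simpleRefl).prod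

@[simp]
lemma wordProd_nil : wordProd [] = 1 := rfl

lemma wordProd_cons (i : Fin 3) (l : List (Fin 3)) :
    wordProd (i :: l) = simpleRefl i * wordProd l := by
  simp [wordProd]

lemma wordProd_append (l l' : List (Fin 3)) : wordProd (l ++ l') = wordProd l * wordProd l' := by
  simp [wordProd]

lemma wordProd_mem_W (l : List (Fin 3)) : wordProd l ∈ W := by
  induction l with
  | nil => exact one_mem W
  | cons i t ih => rw [wordProd_cons]; exact mul_mem (simpleRefl_mem_W i) ih

lemma exists_wordProd_eq {w : V ≃ₗ[ℝ] V} (hw : w ∈ W) : ∃ l, wordProd l = w := by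
  induction hw using Subgroup.closure_induction'' with
  | mem f hf | inv_mem f hf =>
    obtain ⟨i, rfl⟩ := eq_simpleRefl_of_isSimpleReflection hf
    exact ⟨[i], by simp [wordProd, simpleRefl_inv]⟩
  | one => exact ⟨[], rfl⟩
  | mul x y _ _ hx hy =>
    obtain ⟨l, rfl⟩ := hx
    obtain ⟨l', rfl⟩ := hy
    exact ⟨l ++ l', wordProd_append l l'⟩

lemma exists_isChain_wordProd_eq (l : List (Fin 3)) :
    ∃ l', l'.IsChain (· ≠ ·) ∧ wordProd l' = wordProd l := by
  induction l with
  | nil => exact ⟨[], .nil, rfl⟩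
  | cons i t ih =>
    obtain ⟨l', hch, heq⟩ := ih
    match l', hch with
    | [], _ => exact ⟨[i], .singleton i, by simp [wordProd_cons, ← heq]⟩
    | j :: r, hch =>
      by_cases hij : i = j
      · subst hij
        refine ⟨r, hch.tail, ?_⟩
        rw [wordProd_cons, ← heq, wordProd_cons, ← mul_assoc, simpleRefl_mul_self, one_mul]
      · exact ⟨i :: j :: r, hch.cons_cons hij, by rw [wordProd_cons i (j :: r), heq, wordProd_cons]⟩

lemma apply_mem_Φ {w : V ≃ₗ[ℝ] V} (hw : w ∈ W) {x : V} (hx : x ∈ Φ) : w x ∈ Φ := by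
  obtain ⟨u, hu, i, rfl⟩ := hx
  exact ⟨w * u, mul_mem hw hu, i, rfl⟩

lemma neg_mem_Φ {x : V} (hx : x ∈ Φ) : -x ∈ Φ := by
  obtain ⟨u, hu, i, rfl⟩ := hx
  refine ⟨u * simpleRefl i, mul_mem hu (simpleRefl_mem_W i), i, ?_⟩
  rw [LinearEquiv.mul_apply, simpleRefl_α_self, map_neg]

/-! ### Positive roots as words without repeated adjacent letters -/

def rootOf : List (Fin 3) → V
  | [] => 0
  | [j] => α j
  | i :: j :: l => simpleRefl i (rootOf (j :: l))

@[simp]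
lemma rootOf_singleton (j : Fin 3) : rootOf [j] = α j := rfl

lemma rootOf_cons (i : Fin 3) {l : List (Fin 3)} (hl : l ≠ []) :
    rootOf (i :: l) = simpleRefl i (rootOf l) := by
  obtain ⟨j, l, rfl⟩ := List.exists_cons_of_ne_nil hl
  rfl

lemma rootOf_append (l : List (Fin 3)) {l' : List (Fin 3)} (hl' : l' ≠ []) :
    rootOf (l ++ l') = wordProd l (rootOf l') := by
  induction l with
  | nil => rfl
  | cons i t ih =>
    rw [List.cons_append, rootOf_cons i (by simp [hl']), ih, wordProd_cons]
    rfl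

lemma rootOf_mem_Φ {l : List (Fin 3)} (hl : l ≠ []) : rootOf l ∈ Φ := by
  rw [← List.dropLast_append_getLast hl, rootOf_append _ (List.cons_ne_nil _ [])]
  exact ⟨_, wordProd_mem_W _, _, rfl⟩

def PeakedAt (i : Fin 3) (x : V) : Prop := (∀ c, 0 ≤ x c) ∧ ∀ c, c ≠ i → x c < x i

lemma PeakedAt.pos {i : Fin 3} {x : V} (hx : PeakedAt i x) : 0 < x i :=
  (hx.1 (i + 1)).trans_lt (hx.2 _ (by fin_cases i <;> decide))

lemma peakedAt_α (i : Fin 3) : PeakedAt i (α i) :=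
  ⟨fun c => by rw [α_apply]; split_ifs <;> norm_num,
   fun c hc => by rw [α_apply, α_apply, if_neg hc, if_pos rfl]; exact one_pos⟩

lemma PeakedAt.simpleRefl {i m : Fin 3} (him : i ≠ m) {x : V} (hx : PeakedAt m x) :
    PeakedAt i (simpleRefl i x) := by
  obtain ⟨hnn, hmax⟩ := hx
  have := hnn 0; have := hnn 1; have := hnn 2
  have := hmax 0; have := hmax 1; have := hmax 2
  clear hnn hmax
  -- the new `i`-th coordinate is `2 (x m + x k) - x i` with `x i < x m`, `k` the third index
  refine ⟨fun c => ?_, fun c hc => ?_⟩ <;>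
    fin_cases i <;> fin_cases m <;> fin_cases c <;>
    simp_all [simpleRefl_apply_coord, Fin.sum_univ_three] <;> linarith

lemma peakedAt_rootOf {i : Fin 3} {l : List (Fin 3)} (h : (i :: l).IsChain (· ≠ ·)) :
    PeakedAt i (rootOf (i :: l)) := by
  induction l generalizing i with
  | nil => exact peakedAt_α i
  | cons m t ih =>
    rw [List.isChain_cons_cons] at h
    exact (ih h.2).simpleRefl h.1

lemma mem_nnspan_Δ {x : V} : x ∈ nnspan Δ ↔ ∀ c, 0 ≤ x c := by
  constructor
  · intro hx c
    induction hx using Submodule.span_induction with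
    | mem y hy =>
      obtain ⟨j, rfl⟩ := hy
      rw [α_apply]
      split_ifs <;> norm_num
    | zero => rfl
    | add a b _ _ ha hb => exact add_nonneg ha hb
    | smul r a _ ha => exact mul_nonneg r.2 ha
  · intro hx
    have hsum : ∑ c, (⟨x c, hx c⟩ : ℝ≥0) • α c = x := by
      ext d
      simp [α_apply]
    rw [← hsum]
    exact Submodule.sum_mem _ fun c _ => Submodule.smul_mem _ _ (Submodule.subset_span ⟨c, rfl⟩)

lemma mem_nnspan_pair {a b x : V} :
    x ∈ nnspan {a, b} ↔ ∃ r u : ℝ, 0 ≤ r ∧ 0 ≤ u ∧ r • a + u • b = x := by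
  rw [nnspan, SetLike.mem_coe, Submodule.mem_span_pair]
  constructor
  · rintro ⟨r, u, h⟩
    exact ⟨r, u, r.2, u.2, by simpa only [NNReal.smul_def] using h⟩
  · rintro ⟨r, u, hr, hu, h⟩
    exact ⟨⟨r, hr⟩, ⟨u, hu⟩, h⟩

def canonicalRoots : Set V := {x | ∃ l, l ≠ [] ∧ l.IsChain (· ≠ ·) ∧ rootOf l = x}

lemma exists_pos_of_mem_canonicalRoots {x : V} (hx : x ∈ canonicalRoots) : ∃ c, 0 < x c := by
  obtain ⟨_ | ⟨i, l⟩, hl, hch, rfl⟩ := hx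
  · exact absurd rfl hl
  · exact ⟨i, (peakedAt_rootOf hch).pos⟩

lemma canonicalRoots_subset_Φpos : canonicalRoots ⊆ Φpos := by
  rintro _ ⟨_ | ⟨i, l⟩, hl, hch, rfl⟩
  · exact absurd rfl hl
  · exact ⟨rootOf_mem_Φ hl, mem_nnspan_Δ.2 (peakedAt_rootOf hch).1⟩

lemma α_mem_canonicalRoots (i : Fin 3) : α i ∈ canonicalRoots :=
  ⟨[i], List.cons_ne_nil i [], .singleton i, rfl⟩

lemma simpleRefl_mem_canonicalRoots {x : V} (hx : x ∈ canonicalRoots) {i : Fin 3}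
    (hxi : x ≠ α i) : simpleRefl i x ∈ canonicalRoots := by
  obtain ⟨_ | ⟨j, l⟩, hl, hch, rfl⟩ := hx
  · exact absurd rfl hl
  by_cases hij : i = j
  · subst hij
    have hl' : l ≠ [] := by rintro rfl; exact hxi rfl
    obtain ⟨k, l, rfl⟩ := List.exists_cons_of_ne_nil hl'
    exact ⟨k :: l, List.cons_ne_nil k l, hch.tail, by simp [rootOf_cons]⟩
  · exact ⟨i :: j :: l, List.cons_ne_nil _ _, hch.cons_cons hij, rfl⟩

lemma mem_canonicalRoots_or_neg_mem {x : V} (hx : x ∈ Φ) :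
    x ∈ canonicalRoots ∨ -x ∈ canonicalRoots := by
  obtain ⟨w, hw, j, rfl⟩ := hx
  obtain ⟨l, rfl⟩ := exists_wordProd_eq hw
  induction l with
  | nil => exact Or.inl (α_mem_canonicalRoots j)
  | cons i t ih =>
    have hstep : ∀ y ∈ canonicalRoots, simpleRefl i y ∈ canonicalRoots ∨
        -simpleRefl i y ∈ canonicalRoots := fun y hy => by
      by_cases hyi : y = α i
      · subst hyi
        rw [simpleRefl_α_self, neg_neg]
        exact Or.inr (α_mem_canonicalRoots i)
      · exact Or.inl (simpleRefl_mem_canonicalRoots hy hyi)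
    rw [wordProd_cons, LinearEquiv.mul_apply]
    rcases ih (wordProd_mem_W t) with h | h
    · exact hstep _ h
    · simpa [or_comm] using hstep _ h

lemma Φpos_eq_canonicalRoots : Φpos = canonicalRoots := by
  refine subset_antisymm (fun x ⟨hxΦ, hxnn⟩ => ?_) canonicalRoots_subset_Φpos
  refine (mem_canonicalRoots_or_neg_mem hxΦ).resolve_right fun hneg => ?_
  obtain ⟨c, hc⟩ := exists_pos_of_mem_canonicalRoots hneg
  exact (mem_nnspan_Δ.1 hxnn c).not_gt (neg_pos.1 hc)

lemma Φpos_nonneg {x : V} (hx : x ∈ Φpos) (c : Fin 3) : 0 ≤ x c :=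
  mem_nnspan_Δ.1 hx.2 c

lemma α_mem_Φpos (i : Fin 3) : α i ∈ Φpos :=
  canonicalRoots_subset_Φpos (α_mem_canonicalRoots i)

lemma neg_notMem_Φpos {x : V} (hx : x ∈ Φpos) : -x ∉ Φpos := fun hneg => by
  rw [Φpos_eq_canonicalRoots] at hx
  obtain ⟨c, hc⟩ := exists_pos_of_mem_canonicalRoots hx
  exact (Φpos_nonneg hneg c).not_gt (neg_neg_of_pos hc)

lemma mem_Φpos_or_neg_mem {x : V} (hx : x ∈ Φ) : x ∈ Φpos ∨ -x ∈ Φpos := by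
  rw [Φpos_eq_canonicalRoots]
  exact mem_canonicalRoots_or_neg_mem hx

lemma simpleRefl_mem_Φpos {x : V} (hx : x ∈ Φpos) {i : Fin 3} (hxi : x ≠ α i) :
    simpleRefl i x ∈ Φpos := by
  rw [Φpos_eq_canonicalRoots] at hx ⊢
  exact simpleRefl_mem_canonicalRoots hx hxi

lemma eq_α_of_forall_ne_eq_zero {x : V} (hx : x ∈ Φpos) {i : Fin 3}
    (hsupp : ∀ c, c ≠ i → x c = 0) : x = α i := by
  rw [Φpos_eq_canonicalRoots] at hx
  obtain ⟨l, hl, hch, rfl⟩ := hx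
  match l, hch with
  | [j], _ =>
    obtain rfl : j = i := by
      by_contra hji
      simpa [α_apply] using hsupp j hji
    rfl
  | j :: k :: l, hch =>
    rw [List.isChain_cons_cons] at hch
    have hpeak := peakedAt_rootOf hch.2
    have hk : rootOf (j :: k :: l) k = rootOf (k :: l) k := by
      rw [rootOf_cons j (List.cons_ne_nil k l), simpleRefl_apply_coord, if_neg hch.1.symm]
    have hji : j = i := by
      by_contra hji
      exact (peakedAt_rootOf (hch.2.cons_cons hch.1)).pos.ne' (hsupp j hji)
    subst hji
    exact absurd (hsupp k hch.1.symm) (hk ▸ hpeak.pos.ne')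

lemma α_notMem_nnspan {a b : V} (ha : a ∈ Φpos) (hb : b ∈ Φpos) {i : Fin 3}
    (hai : a ≠ α i) (hbi : b ≠ α i) : α i ∉ nnspan {a, b} := by
  rw [mem_nnspan_pair]
  rintro ⟨r, u, hr, hu, h⟩
  have hcoord : ∀ c, r * a c + u * b c = α i c := fun c => congrFun h c
  have hzero : ∀ c, c ≠ i → r * a c = 0 ∧ u * b c = 0 := fun c hc => by
    have := hcoord c
    rw [α_apply, if_neg hc] at this
    have := mul_nonneg hr (Φpos_nonneg ha c)
    have := mul_nonneg hu (Φpos_nonneg hb c)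
    constructor <;> linarith
  have hi := hcoord i
  rw [α_apply, if_pos rfl] at hi
  rcases hr.lt_or_eq with hr | rfl
  · exact hai (eq_α_of_forall_ne_eq_zero ha fun c hc =>
      (mul_eq_zero.1 (hzero c hc).1).resolve_left hr.ne')
  · rcases hu.lt_or_eq with hu | rfl
    · exact hbi (eq_α_of_forall_ne_eq_zero hb fun c hc =>
        (mul_eq_zero.1 (hzero c hc).2).resolve_left hu.ne')
    · simp at hi

/-! ### Reflecting a parabolic biclosed set in a simple root -/

lemma IsRank2Parabolic.exists_submodule {P : Set V} (hP : IsRank2Parabolic P) :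
    ∃ S : Submodule ℝ V, P = (S : Set V) ∩ Φ := by
  obtain ⟨w, hw, p, q, -, rfl⟩ := hP
  refine ⟨(Submodule.span ℝ {α p, α q}).map (w : V →ₗ[ℝ] V), ?_⟩
  have hΦ : (fun x => w x) '' Φ = Φ :=
    subset_antisymm (Set.image_subset_iff.2 fun x hx => apply_mem_Φ hw hx) fun x hx =>
      ⟨w.symm x, apply_mem_Φ (inv_mem hw) hx, w.apply_symm_apply x⟩
  rw [Set.image_inter w.injective, hΦ, Submodule.map_coe]
  rfl

lemma IsRank2Parabolic.neg_mem {P : Set V} (hP : IsRank2Parabolic P) {x : V} (hx : x ∈ P) :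
    -x ∈ P := by
  obtain ⟨S, rfl⟩ := hP.exists_submodule
  exact ⟨S.neg_mem hx.1, neg_mem_Φ hx.2⟩

lemma IsRank2Parabolic.simpleRefl_mem {P : Set V} (hP : IsRank2Parabolic P) {i : Fin 3}
    (hi : α i ∈ P) {x : V} (hx : x ∈ P) : simpleRefl i x ∈ P := by
  obtain ⟨S, rfl⟩ := hP.exists_submodule
  exact ⟨S.sub_mem hx.1 (S.smul_mem _ hi.1), apply_mem_Φ (simpleRefl_mem_W i) hx.2⟩

lemma IsRank2Parabolic.preimage_simpleRefl {P : Set V} (hP : IsRank2Parabolic P) (i : Fin 3) :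
    IsRank2Parabolic (simpleRefl i ⁻¹' P) := by
  obtain ⟨w, hw, p, q, hpq, rfl⟩ := hP
  refine ⟨simpleRefl i * w, mul_mem (simpleRefl_mem_W i) hw, p, q, hpq, ?_⟩
  rw [← simpleRefl_symm, ← LinearEquiv.image_eq_preimage_symm, simpleRefl_symm,
    Set.image_image]
  rfl

lemma IsClosedIn.preimage {A T : Set V} (h : IsClosedIn A T) (g : V ≃ₗ[ℝ] V) :
    IsClosedIn (g ⁻¹' A) (g ⁻¹' T) := by
  rintro a ha b hb x ⟨hx, hxA⟩
  obtain ⟨r, u, hr, hu, rfl⟩ := mem_nnspan_pair.1 hx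
  refine h _ ha _ hb ⟨mem_nnspan_pair.2 ⟨r, u, hr, hu, ?_⟩, hxA⟩
  rw [map_add, map_smul, map_smul]

lemma IsBiclosedIn.preimage {A T : Set V} (h : IsBiclosedIn A T) (g : V ≃ₗ[ℝ] V) :
    IsBiclosedIn (g ⁻¹' A) (g ⁻¹' T) :=
  ⟨Set.preimage_mono h.1, h.2.1.preimage g, by rw [← Set.preimage_sdiff]; exact h.2.2.preimage g⟩

-- What is used of a simple reflection `σ = s_β` acting on the positive roots `A` of a subsystem.
structure IsSimpleRootReflection (A : Set V) (σ : V ≃ₗ[ℝ] V) (β : V) : Prop where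
  apply_apply : ∀ x, σ (σ x) = x
  apply_self : σ β = -β
  neg_notMem : -β ∉ A
  apply_mem : ∀ x ∈ A, x ≠ β → σ x ∈ A
  notMem_nnspan : ∀ a ∈ A, ∀ b ∈ A, a ≠ β → b ≠ β → β ∉ nnspan {a, b}
  smul_eq : ∀ t : ℝ, t • β ∈ A → t • β = β

namespace IsSimpleRootReflection

variable {A T : Set V} {σ : V ≃ₗ[ℝ] V} {β : V}

lemma apply_ne (h : IsSimpleRootReflection A σ β) {x : V} (hx : x ∈ A) : σ x ≠ β :=
  fun hxβ => h.neg_notMem (by rwa [← h.apply_self, ← hxβ, h.apply_apply])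

lemma preimage_subset (h : IsSimpleRootReflection A σ β) (hTA : T ⊆ A) :
    σ ⁻¹' (T \ {β}) ⊆ A :=
  fun x ⟨hxT, hxβ⟩ => h.apply_apply x ▸ h.apply_mem _ (hTA hxT) hxβ

lemma ne_of_mem_preimage (h : IsSimpleRootReflection A σ β) (hTA : T ⊆ A) {x : V}
    (hx : x ∈ σ ⁻¹' (T \ {β})) : x ≠ β := fun hxβ =>
  h.neg_notMem (hTA (by rw [← h.apply_self, ← hxβ]; exact hx.1))

lemma smul_notMem_preimage (h : IsSimpleRootReflection A σ β) (hTA : T ⊆ A) (t : ℝ) :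
    t • β ∉ σ ⁻¹' (T \ {β}) := fun ht => by
  rw [h.smul_eq t (h.preimage_subset hTA ht), Set.mem_preimage, h.apply_self] at ht
  exact h.neg_notMem (hTA ht.1)

lemma apply_mem_sdiff (h : IsSimpleRootReflection A σ β) {c : V}
    (hc : c ∈ A \ σ ⁻¹' (T \ {β})) (hcβ : c ≠ β) : σ c ∈ A \ T :=
  ⟨h.apply_mem c hc.1 hcβ, fun hcT => hc.2 ⟨hcT, h.apply_ne hc.1⟩⟩

lemma isClosedIn_preimage (h : IsSimpleRootReflection A σ β) (hTA : T ⊆ A)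
    (hT : IsClosedIn A T) : IsClosedIn A (σ ⁻¹' (T \ {β})) := by
  rintro a ha b hb x ⟨hx, hxA⟩
  have hxβ : x ≠ β := fun hxβ => h.notMem_nnspan a (h.preimage_subset hTA ha) b
    (h.preimage_subset hTA hb) (h.ne_of_mem_preimage hTA ha) (h.ne_of_mem_preimage hTA hb)
    (hxβ ▸ hx)
  obtain ⟨r, u, hr, hu, rfl⟩ := mem_nnspan_pair.1 hx
  exact ⟨hT _ ha.1 _ hb.1 ⟨mem_nnspan_pair.2 ⟨r, u, hr, hu, by simp⟩,
    h.apply_mem _ hxA hxβ⟩, h.apply_ne hxA⟩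

-- Undoing `σ` expresses `σ c` through `β` and the reflected combination, both in `T`.
lemma smul_add_notMem_preimage (h : IsSimpleRootReflection A σ β) (hT : IsBiclosedIn A T)
    (hβ : β ∈ T) {c : V} (hc : c ∈ A \ σ ⁻¹' (T \ {β})) (hcβ : c ≠ β) {r u : ℝ}
    (hr : 0 ≤ r) (hu : 0 ≤ u) : r • β + u • c ∉ σ ⁻¹' (T \ {β}) := by
  intro hx
  rcases hu.lt_or_eq with hu | rfl
  · refine (h.apply_mem_sdiff hc hcβ).2 (hT.2.1 _ hx.1 β hβ ⟨mem_nnspan_pair.2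
      ⟨u⁻¹, r * u⁻¹, inv_nonneg.2 hu.le, by positivity, ?_⟩, (h.apply_mem_sdiff hc hcβ).1⟩)
    rw [map_add, map_smul, map_smul, h.apply_self, smul_add, inv_smul_smul₀ hu.ne']
    module
  · exact h.smul_notMem_preimage hT.1 r (by simpa using hx)

lemma isClosedIn_sdiff_preimage (h : IsSimpleRootReflection A σ β) (hT : IsBiclosedIn A T)
    (hβ : β ∈ T) : IsClosedIn A (A \ σ ⁻¹' (T \ {β})) := by
  rintro a ha b hb x ⟨hx, hxA⟩
  refine ⟨hxA, fun hxT => ?_⟩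
  obtain ⟨r, u, hr, hu, rfl⟩ := mem_nnspan_pair.1 hx
  by_cases haβ : a = β <;> by_cases hbβ : b = β
  · subst haβ hbβ
    exact h.smul_notMem_preimage hT.1 (r + u) (by rwa [add_smul])
  · subst haβ
    exact h.smul_add_notMem_preimage hT hβ hb hbβ hr hu hxT
  · subst hbβ
    exact h.smul_add_notMem_preimage hT hβ ha haβ hu hr (by rwa [add_comm])
  · exact (hT.2.2 _ (h.apply_mem_sdiff ha haβ) _ (h.apply_mem_sdiff hb hbβ)
      ⟨mem_nnspan_pair.2 ⟨r, u, hr, hu, by simp⟩, hT.1 hxT.1⟩).2 hxT.1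

end IsSimpleRootReflection

lemma IsBiclosedIn.preimage_reflection {A T : Set V} {σ : V ≃ₗ[ℝ] V} {β : V}
    (hT : IsBiclosedIn A T) (h : IsSimpleRootReflection A σ β) (hβ : β ∈ T) :
    IsBiclosedIn A (σ ⁻¹' (T \ {β})) :=
  ⟨h.preimage_subset hT.1, h.isClosedIn_preimage hT.1 hT.2.1, h.isClosedIn_sdiff_preimage hT hβ⟩

lemma simpleRefl_mem_Φpos_iff {x : V} {i : Fin 3} (hx : x ≠ α i) (hx' : x ≠ -α i) :
    simpleRefl i x ∈ Φpos ↔ x ∈ Φpos := by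
  refine ⟨fun h => ?_, fun h => simpleRefl_mem_Φpos h hx⟩
  have hne : simpleRefl i x ≠ α i := fun h' => hx' (by rw [← simpleRefl_α_self, ← h',
    simpleRefl_apply_apply])
  simpa using simpleRefl_mem_Φpos h hne

lemma IsRank2Parabolic.isSimpleRootReflection {P : Set V} (hP : IsRank2Parabolic P) {i : Fin 3}
    (hi : α i ∈ P) : IsSimpleRootReflection (P ∩ Φpos) (simpleRefl i) (α i) where
  apply_apply := simpleRefl_apply_apply i
  apply_self := simpleRefl_α_self i
  neg_notMem h := neg_notMem_Φpos (α_mem_Φpos i) h.2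
  apply_mem x hx hxi := ⟨hP.simpleRefl_mem hi hx.1, simpleRefl_mem_Φpos hx.2 hxi⟩
  notMem_nnspan a ha b hb := α_notMem_nnspan ha.2 hb.2
  smul_eq t ht := eq_α_of_forall_ne_eq_zero ht.2 fun c hc => by simp [α_apply, hc]

lemma IsParabolicBiclosed.preimage_simpleRefl {R : Set V} (hR : IsParabolicBiclosed R)
    {i : Fin 3} (hi : α i ∈ R) : IsParabolicBiclosed (simpleRefl i ⁻¹' (R \ {α i})) := by
  refine ⟨fun x ⟨hxR, hxi⟩ => by simpa using simpleRefl_mem_Φpos (hR.1 hxR) hxi, fun P hP => ?_⟩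
  by_cases hiP : α i ∈ P
  · have hPσ : simpleRefl i ⁻¹' P = P := Set.ext fun x =>
      ⟨fun hx => by simpa using hP.simpleRefl_mem hiP hx, hP.simpleRefl_mem hiP⟩
    rw [← hPσ, ← Set.preimage_inter, hPσ, Set.sdiff_inter_right_comm]
    exact (hR.2 P hP).preimage_reflection (hP.isSimpleRootReflection hiP) ⟨hi, hiP⟩
  · set P' := simpleRefl i ⁻¹' P
    have hiP' : α i ∉ P' := fun h => hiP (by simpa [simpleRefl_α_self] using hP.neg_mem h)
    have hP'σ : simpleRefl i ⁻¹' P' = P := by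
      simp only [P', Set.preimage_preimage, simpleRefl_apply_apply, Set.preimage_id']
    have hpos : P ∩ Φpos = simpleRefl i ⁻¹' (P' ∩ Φpos) := by
      ext x
      simp only [Set.mem_inter_iff, Set.mem_preimage, P', simpleRefl_apply_apply]
      refine and_congr_right fun hxP => (simpleRefl_mem_Φpos_iff ?_ ?_).symm
      · exact fun h => hiP (h ▸ hxP)
      · exact fun h => hiP (by simpa [h] using hP.neg_mem hxP)
    rw [hpos, ← hP'σ, ← Set.preimage_inter, Set.sdiff_inter_right_comm,
      Set.sdiff_singleton_eq_self fun h => hiP' h.2]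
    exact (hR.2 P' (hP.preimage_simpleRefl i)).preimage (simpleRefl i)

/-! ### Simple roots in parabolic biclosed sets -/

def alt : Fin 3 → Fin 3 → ℕ → List (Fin 3)
  | _, _, 0 => []
  | p, q, n + 1 => p :: alt q p n

lemma length_alt (p q : Fin 3) (n : ℕ) : (alt p q n).length = n := by
  induction n generalizing p q with
  | zero => rfl
  | succ n ih => simp [alt, ih]

lemma alt_succ_ne_nil (p q : Fin 3) (n : ℕ) : alt p q (n + 1) ≠ [] := List.cons_ne_nil _ _

lemma alt_isChain {p q : Fin 3} (hpq : p ≠ q) (n : ℕ) : (alt p q n).IsChain (· ≠ ·) := by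
  induction n generalizing p q with
  | zero => exact .nil
  | succ n ih =>
    refine List.isChain_cons.2 ⟨fun y hy => ?_, ih hpq.symm⟩
    cases n with
    | zero => simp [alt] at hy
    | succ n => simpa [alt, ← Option.some_inj.1 hy] using hpq

lemma rootOf_alt {p q : Fin 3} (hpq : p ≠ q) (k : ℕ) :
    rootOf (alt p q (k + 1)) = ((k : ℝ) + 1) • α p + (k : ℝ) • α q := by
  induction k generalizing p q with
  | zero => simp [alt]
  | succ k ih =>
    rw [alt, rootOf_cons p (alt_succ_ne_nil q p k), ih hpq.symm, simpleRefl_apply,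
      B_add_right, B_smul_right, B_smul_right, B_α_self, B_α_of_ne hpq]
    push_cast
    module

lemma rootOf_alt_mem {p q : Fin 3} (hpq : p ≠ q) (k : ℕ) :
    rootOf (alt p q (k + 1)) ∈ (Submodule.span ℝ {α p, α q} : Set V) ∩ Φ :=
  ⟨rootOf_alt hpq k ▸ Submodule.mem_span_pair.2 ⟨_, _, rfl⟩, rootOf_mem_Φ (List.cons_ne_nil _ _)⟩

lemma exists_eq_append_alt {L : List (Fin 3)} (hL : L.IsChain (· ≠ ·)) (h2 : 2 ≤ L.length) :
    ∃ l p q m, p ≠ q ∧ L = l ++ alt p q (m + 2) ∧ ∀ z ∈ l.getLast?, z ≠ p ∧ z ≠ q := by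
  induction L with
  | nil => simp at h2
  | cons x t ih =>
    rcases Nat.lt_or_ge t.length 2 with ht | ht
    · obtain ⟨y, rfl⟩ : ∃ y, t = [y] := by
        match t, h2, ht with
        | [y], _, _ => exact ⟨y, rfl⟩
      exact ⟨[], x, y, 0, List.isChain_pair.1 hL, rfl, by simp⟩
    · obtain ⟨l, p, q, m, hpq, rfl, hlast⟩ := ih hL.tail ht
      rcases l with _ | ⟨u, l⟩
      · have hxp : x ≠ p := (List.isChain_cons.1 hL).1 p rfl
        by_cases hxq : x = q
        · subst hxq
          exact ⟨[], x, p, m + 1, hpq.symm, rfl, by simp⟩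
        · exact ⟨[x], p, q, m, hpq, rfl, by simp [hxp, hxq]⟩
      · exact ⟨x :: u :: l, p, q, m, hpq, rfl, by simpa using hlast⟩

lemma rootOf_append_alt_mem_nnspan (l : List (Fin 3)) {p q : Fin 3} (hpq : p ≠ q) (m : ℕ) :
    rootOf (l ++ alt p q (m + 2)) ∈ nnspan {rootOf (l ++ alt p q (m + 1)), rootOf (l ++ [q])} := by
  have hm : (m : ℝ) + 1 ≠ 0 := by positivity
  refine mem_nnspan_pair.2 ⟨((m : ℝ) + 2) / ((m : ℝ) + 1), 1 / ((m : ℝ) + 1), by positivity,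
    by positivity, ?_⟩
  rw [rootOf_append l (alt_succ_ne_nil p q (m + 1)), rootOf_append l (alt_succ_ne_nil p q m),
    rootOf_append l (List.cons_ne_nil q []), ← map_smul, ← map_smul, ← map_add,
    rootOf_alt hpq, rootOf_alt hpq, rootOf_singleton]
  congr 1
  push_cast
  match_scalars <;> field_simp <;> ring

lemma IsParabolicBiclosed.mem_or_mem_of_mem_nnspan {R : Set V} (hR : IsParabolicBiclosed R)
    {P : Set V} (hP : IsRank2Parabolic P) {a b x : V} (ha : a ∈ P ∩ Φpos) (hb : b ∈ P ∩ Φpos)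
    (hx : x ∈ P ∩ Φpos) (hxab : x ∈ nnspan {a, b}) (hxR : x ∈ R) : a ∈ R ∨ b ∈ R := by
  by_contra! h
  exact ((hR.2 P hP).2.2 a ⟨ha, fun h' => h.1 h'.1⟩ b ⟨hb, fun h' => h.2 h'.1⟩
    ⟨hxab, hx⟩).2 ⟨hxR, hx.1⟩

lemma IsParabolicBiclosed.exists_shorter_mem {R : Set V} (hR : IsParabolicBiclosed R)
    {L : List (Fin 3)} (hL : L.IsChain (· ≠ ·)) (h2 : 2 ≤ L.length) (hLR : rootOf L ∈ R) :
    ∃ L', L' ≠ [] ∧ L'.IsChain (· ≠ ·) ∧ L'.length < L.length ∧ rootOf L' ∈ R := by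
  obtain ⟨l, p, q, m, hpq, rfl, hlast⟩ := exists_eq_append_alt hL h2
  have hl : l.IsChain (· ≠ ·) := (List.isChain_append.1 hL).1
  have hchA : (l ++ alt p q (m + 1)).IsChain (· ≠ ·) := hl.append (alt_isChain hpq _)
    fun z hz y hy => Option.some_inj.1 hy ▸ (hlast z hz).1
  have hchB : (l ++ [q]).IsChain (· ≠ ·) := hl.append (.singleton q)
    fun z hz y hy => Option.some_inj.1 hy ▸ (hlast z hz).2
  set P := (fun x => wordProd l x) '' ((Submodule.span ℝ {α p, α q} : Set V) ∩ Φ)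
  have hP : IsRank2Parabolic P := ⟨wordProd l, wordProd_mem_W l, p, q, hpq, rfl⟩
  have hmem : ∀ L', L' ≠ [] → (l ++ L').IsChain (· ≠ ·) → rootOf L' ∈
      (Submodule.span ℝ {α p, α q} : Set V) ∩ Φ → rootOf (l ++ L') ∈ P ∩ Φpos :=
    fun L' hL' hch h => ⟨⟨_, h, (rootOf_append l hL').symm⟩,
      canonicalRoots_subset_Φpos ⟨_, by simp [hL'], hch, rfl⟩⟩
  rcases hR.mem_or_mem_of_mem_nnspan hP (hmem _ (alt_succ_ne_nil _ _ _) hchA (rootOf_alt_mem hpq m))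
      (hmem [q] (List.cons_ne_nil q []) hchB
        ⟨Submodule.subset_span (Set.mem_insert_of_mem _ rfl), rootOf_mem_Φ (List.cons_ne_nil q [])⟩)
      (hmem _ (alt_succ_ne_nil _ _ _) hL (rootOf_alt_mem hpq (m + 1)))
      (rootOf_append_alt_mem_nnspan l hpq m) hLR with h | h
  · exact ⟨_, by simp [alt], hchA, by simp [length_alt], h⟩
  · exact ⟨_, by simp, hchB, by simp [length_alt], h⟩

lemma IsParabolicBiclosed.exists_α_mem {R : Set V} (hR : IsParabolicBiclosed R)
    (hne : R.Nonempty) : ∃ i, α i ∈ R := by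
  obtain ⟨x, hx⟩ := hne
  obtain ⟨L, hL, hch, rfl⟩ := Φpos_eq_canonicalRoots ▸ hR.1 hx
  induction h : L.length using Nat.strong_induction_on generalizing L with
  | _ n ih =>
    rcases Nat.lt_or_ge L.length 2 with h2 | h2
    · match L, hL, h2 with
      | [j], _, _ => exact ⟨j, hx⟩
    · obtain ⟨L', hL', hch', hlt, hL'R⟩ := hR.exists_shorter_mem hch h2 hx
      exact ih _ (h ▸ hlt) L' hL' hch' hL'R rfl

/-! ### Inversion sets -/

lemma mem_inversions {w : V ≃ₗ[ℝ] V} {x : V} :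
    x ∈ Inversions w ↔ x ∈ Φpos ∧ -w.symm x ∈ Φpos := by
  rw [Inversions, Set.mem_inter_iff, ← LinearEquiv.coe_toEquiv, Set.mem_image_equiv]
  simp

lemma inversions_one : Inversions (1 : V ≃ₗ[ℝ] V) = ∅ :=
  Set.eq_empty_of_forall_notMem fun _ hx =>
    neg_notMem_Φpos (mem_inversions.1 hx).1 (mem_inversions.1 hx).2

lemma symm_simpleRefl_mul_apply (i : Fin 3) (u : V ≃ₗ[ℝ] V) (x : V) :
    (simpleRefl i * u).symm x = u.symm (simpleRefl i x) := by
  rw [← simpleRefl_symm]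
  rfl

lemma inversions_simpleRefl_mul_subset (i : Fin 3) (u : V ≃ₗ[ℝ] V) :
    Inversions (simpleRefl i * u) ⊆ insert (α i) (simpleRefl i ⁻¹' Inversions u) := by
  intro x hx
  rw [mem_inversions, symm_simpleRefl_mul_apply] at hx
  by_cases hxi : x = α i
  · exact Or.inl hxi
  · exact Or.inr (mem_inversions.2 ⟨simpleRefl_mem_Φpos hx.1 hxi, hx.2⟩)

lemma inversions_simpleRefl_mul {u : V ≃ₗ[ℝ] V} (hu : u ∈ W) {i : Fin 3}
    (hi : α i ∉ Inversions u) :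
    Inversions (simpleRefl i * u) = insert (α i) (simpleRefl i ⁻¹' Inversions u) := by
  refine (inversions_simpleRefl_mul_subset i u).antisymm (Set.insert_subset_iff.2 ⟨?_, ?_⟩)
  · rw [mem_inversions, symm_simpleRefl_mul_apply, simpleRefl_α_self, map_neg, neg_neg]
    refine ⟨α_mem_Φpos i, (mem_Φpos_or_neg_mem ?_).resolve_right fun h => hi ?_⟩
    · exact apply_mem_Φ (inv_mem hu) ⟨1, one_mem W, i, rfl⟩
    · exact mem_inversions.2 ⟨α_mem_Φpos i, h⟩
  · intro x hx
    have hxi : simpleRefl i x ≠ α i := fun h => hi (h ▸ hx)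
    rw [Set.mem_preimage, mem_inversions] at hx
    rw [mem_inversions, symm_simpleRefl_mul_apply]
    exact ⟨by simpa using simpleRefl_mem_Φpos hx.1 hxi, hx.2⟩

lemma inversions_finite {w : V ≃ₗ[ℝ] V} (hw : w ∈ W) : (Inversions w).Finite := by
  obtain ⟨l, rfl⟩ := exists_wordProd_eq hw
  induction l with
  | nil => simp [inversions_one]
  | cons i t ih =>
    rw [wordProd_cons]
    exact (((ih (wordProd_mem_W t)).preimage (simpleRefl i).injective.injOn).insert
      (α i)).subset (inversions_simpleRefl_mul_subset i _)

lemma inversions_nonempty {w : V ≃ₗ[ℝ] V} (hw : w ∈ W) (hne : w ≠ 1) :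
    (Inversions w).Nonempty := by
  obtain ⟨l, rfl⟩ := exists_wordProd_eq hw
  obtain ⟨l, hch, heq⟩ := exists_isChain_wordProd_eq l
  rw [← heq] at hne ⊢
  have hl : l ≠ [] := by rintro rfl; exact hne rfl
  obtain ⟨t, j, rfl⟩ : ∃ t j, l = t ++ [j] := ⟨_, _, (List.dropLast_append_getLast hl).symm⟩
  refine ⟨rootOf (t ++ [j]), mem_inversions.2
    ⟨canonicalRoots_subset_Φpos ⟨_, hl, hch, rfl⟩, ?_⟩⟩
  have hinv : (wordProd (t ++ [j])).symm (rootOf (t ++ [j])) = -α j := by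
    rw [LinearEquiv.symm_apply_eq, rootOf_append t (List.cons_ne_nil j []), wordProd_append]
    simp [wordProd_cons, simpleRefl_α_self]
  rw [hinv, neg_neg]
  exact α_mem_Φpos j

lemma IsParabolicBiclosed.exists_inversions_eq {R : Set V} (hR : IsParabolicBiclosed R)
    (hfin : R.Finite) : ∃ w ∈ W, Inversions w = R := by
  induction h : R.ncard generalizing R with
  | zero => exact ⟨1, one_mem W, by rw [inversions_one, (Set.ncard_eq_zero hfin).1 h]⟩
  | succ n ih =>
    obtain ⟨i, hi⟩ := hR.exists_α_mem (Set.nonempty_of_ncard_ne_zero (by omega))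
    have hcard : (simpleRefl i ⁻¹' (R \ {α i})).ncard = n := by
      rw [Set.ncard_preimage_of_injective_subset_range (simpleRefl i).injective
        (by simp [(simpleRefl i).surjective.range_eq]), Set.ncard_sdiff_singleton_of_mem hi, h,
        Nat.add_sub_cancel]
    obtain ⟨u, hu, hR'⟩ := ih (hR.preimage_simpleRefl hi)
      (hfin.sdiff.preimage (simpleRefl i).injective.injOn) hcard
    have hiu : α i ∉ Inversions u := fun h => by
      rw [hR', Set.mem_preimage, simpleRefl_α_self] at h
      exact neg_notMem_Φpos (α_mem_Φpos i) (hR.1 h.1)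
    refine ⟨simpleRefl i * u, mul_mem (simpleRefl_mem_W i) hu, ?_⟩
    rw [inversions_simpleRefl_mul hu hiu, hR', Set.preimage_preimage]
    simp [Set.insert_eq_of_mem hi]

/-- A parabolic biclosed set `R ⊆ Φ⁺` is finite and nonempty iff it is the inversion
set of some nonidentity element of `W`. -/
theorem parabolic_biclosed_finite_iff_inversion_set (R : Set V)
    (hR : IsParabolicBiclosed R) :
    (R.Finite ∧ R.Nonempty) ↔ ∃ w : V ≃ₗ[ℝ] V, w ∈ W ∧ w ≠ 1 ∧ R = Inversions w := by
  constructor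
  · rintro ⟨hfin, hne⟩
    obtain ⟨w, hw, rfl⟩ := hR.exists_inversions_eq hfin
    exact ⟨w, hw, by rintro rfl; simp [inversions_one] at hne, rfl⟩
  · rintro ⟨w, hw, hne, rfl⟩
    exact ⟨inversions_finite hw, inversions_nonempty hw hne⟩
end
end
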